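/- The unification of two unifiable, variable-disjoint g.v.d.'s that have no common ground member is again a g.v.d. (that is, there is an mgu θ such that the common instance is a g.v.d.). -/

import Mathlib

/-- Terms: variables, number constants, and list constructors. -/
inductive Tm : Type
  | var : ℕ → Tm
  | const : ℕ → Tm
  | nil : Tm
  | cons : Tm → Tm → Tm
deriving DecidableEq

/-- The set of variables of a term. -/
def Tm.vars : Tm → Finset ℕ
  | .var x => {x}
  | .const _ => ∅
  | .nil => ∅
  | .cons s t => s.vars ∪ t.vars

/-- A term is ground if it has no variables. -/
def Tm.Ground (t : Tm) : Prop := t.vars = ∅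

/-- Boolean groundness test. -/
def Tm.groundB : Tm → Bool
  | .var _ => false
  | .const _ => true
  | .nil => true
  | .cons s t => s.groundB && t.groundB

/-- Applying a substitution to a term. -/
def Tm.subst (σ : ℕ → Tm) : Tm → Tm
  | .var x => σ x
  | .const c => .const c
  | .nil => .nil
  | .cons s t => .cons (s.subst σ) (t.subst σ)

/-- The open list `[t₁,…,tₙ|v]` with members `ts` and open-list variable `v`. -/
def mkOpen (ts : List Tm) (v : ℕ) : Tm := ts.foldr .cons (.var v)

/-- The (closed) list `[t₁,…,tₙ]` with members `ts`. -/
def mkList (ts : List Tm) : Tm := ts.foldr .cons .nil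

/-- `(ts, v)` describes a g.v.d. (a linear open list with pairwise distinct
    members, each member ground or a variable). -/
def IsGVD (ts : List Tm) (v : ℕ) : Prop :=
  (∀ t ∈ ts, t.Ground ∨ ∃ x, t = .var x) ∧
  ts.Nodup ∧
  (ts.map Tm.vars).Pairwise Disjoint ∧
  ∀ t ∈ ts, v ∉ t.vars

/-- `θ` unifies `s` and `t`. -/
def IsUnifier (s t : Tm) (θ : ℕ → Tm) : Prop := s.subst θ = t.subst θ

/-- `θ` is a most general unifier of `s` and `t`. -/
def IsMGU (s t : Tm) (θ : ℕ → Tm) : Prop :=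
  IsUnifier s t θ ∧ ∀ σ, IsUnifier s t σ → ∃ δ, ∀ x, σ x = (θ x).subst δ

/-- `s` is the `k`-th member (1-based) of the term `t`,
    i.e. `t = [t₁,…,t_{k-1},s|t₀]`. -/
inductive KthMem : Tm → ℕ → Tm → Prop
  | head (s t : Tm) : KthMem (.cons s t) 1 s
  | tail {t : Tm} {k : ℕ} {s : Tm} (a : Tm) : KthMem t k s → KthMem (.cons a t) (k + 1) s

/-!
Let `[ts|v]` be the shorter list and split `us = us₁ ++ us₂` with `us₁` as long as `ts`.
Unifying `[ts|v]` with `[us|w]` amounts to solving the equations `tᵢ = uᵢ` together with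
`v = [us₂|w]`. By linearity and variable disjointness, distinct equations share no variables,
and every equation has a variable side unless both sides are ground, in which case
unifiability makes them equal. Binding each variable side to the other side is then an mgu,
and the common instance is `[r₁,…,rₙ,us₂|w]` with `rᵢ = tᵢ` if `tᵢ` is ground and `rᵢ = uᵢ`
otherwise. It is again a g.v.d. because no ground `tᵢ` is a member of `us`.
-/

open Function

instance Tm.decidableGround : DecidablePred Tm.Ground :=
  fun t => inferInstanceAs (Decidable (t.vars = ∅))

namespace Tm

lemma subst_congr {σ σ' : ℕ → Tm} {t : Tm} (h : ∀ x ∈ t.vars, σ x = σ' x) :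
    t.subst σ = t.subst σ' := by
  induction t with
  | var x => exact h x (Finset.mem_singleton_self x)
  | const c => rfl
  | nil => rfl
  | cons s t ihs iht =>
    simp only [vars, Finset.mem_union] at h
    simp only [subst, ihs fun x hx => h x (.inl hx), iht fun x hx => h x (.inr hx)]

lemma subst_var (t : Tm) : t.subst .var = t := by
  induction t with
  | var x => rfl
  | const c => rfl
  | nil => rfl
  | cons s t ihs iht => simp only [subst, ihs, iht]

lemma subst_eq_self {σ : ℕ → Tm} {t : Tm} (h : ∀ x ∈ t.vars, σ x = .var x) : t.subst σ = t :=
  (subst_congr h).trans t.subst_var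

lemma Ground.subst_eq {t : Tm} (h : t.Ground) (σ : ℕ → Tm) : t.subst σ = t :=
  subst_eq_self fun x hx => by
    have h' : t.vars = ∅ := h
    simp [h'] at hx

end Tm

lemma mkOpen_cons (t : Tm) (ts : List Tm) (v : ℕ) : mkOpen (t :: ts) v = .cons t (mkOpen ts v) :=
  rfl

lemma mem_vars_mkOpen {x : ℕ} {ts : List Tm} {v : ℕ} :
    x ∈ (mkOpen ts v).vars ↔ x = v ∨ ∃ t ∈ ts, x ∈ t.vars := by
  induction ts with
  | nil => simp [mkOpen, Tm.vars]
  | cons t ts ih =>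
    simp only [mkOpen_cons, Tm.vars, Finset.mem_union, ih, List.mem_cons, exists_eq_or_imp]
    tauto

lemma vars_subset_vars_mkOpen {t : Tm} {ts : List Tm} (ht : t ∈ ts) (v : ℕ) :
    t.vars ⊆ (mkOpen ts v).vars :=
  fun _ hx => mem_vars_mkOpen.2 (.inr ⟨t, ht, hx⟩)

lemma vars_var_subset_vars_mkOpen (ts : List Tm) (v : ℕ) : (Tm.var v).vars ⊆ (mkOpen ts v).vars :=
  Finset.singleton_subset_iff.2 (mem_vars_mkOpen.2 (.inl rfl))

lemma vars_mkOpen_subset_append (us₁ us₂ : List Tm) (w : ℕ) :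
    (mkOpen us₂ w).vars ⊆ (mkOpen (us₁ ++ us₂) w).vars := by
  intro x hx
  rcases mem_vars_mkOpen.1 hx with rfl | ⟨c, hc, hxc⟩
  · exact mem_vars_mkOpen.2 (.inl rfl)
  · exact vars_subset_vars_mkOpen (List.mem_append_right _ hc) w hxc

lemma subst_mkOpen_of_eq {σ : ℕ → Tm} {ts us : List Tm} {v w : ℕ} (h : σ v = mkOpen us w) :
    (mkOpen ts v).subst σ = mkOpen (ts.map (Tm.subst σ) ++ us) w := by
  induction ts with
  | nil => exact h
  | cons t ts ih => simp only [mkOpen_cons, Tm.subst, ih, List.map_cons, List.cons_append]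

def bindSubst (bs : List (ℕ × Tm)) : ℕ → Tm :=
  bs.foldr (fun b σ => Function.update σ b.1 b.2) .var

lemma bindSubst_eq_var_or_mem (bs : List (ℕ × Tm)) (x : ℕ) :
    bindSubst bs x = .var x ∨ (x, bindSubst bs x) ∈ bs := by
  induction bs with
  | nil => exact .inl rfl
  | cons b bs ih =>
    by_cases hx : x = b.1
    · subst hx
      simp [bindSubst]
    · simp only [bindSubst, List.foldr_cons, Function.update_of_ne hx] at ih ⊢
      exact ih.imp_right (List.mem_cons_of_mem _)

lemma bindSubst_of_notMem {bs : List (ℕ × Tm)} {x : ℕ} (h : x ∉ bs.map Prod.fst) :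
    bindSubst bs x = .var x := by
  induction bs with
  | nil => rfl
  | cons b bs ih =>
    simp only [List.map_cons, List.mem_cons, not_or] at h
    simp only [bindSubst, List.foldr_cons, Function.update_of_ne h.1]
    exact ih h.2

lemma bindSubst_of_mem {bs : List (ℕ × Tm)} (hnd : (bs.map Prod.fst).Nodup) {b : ℕ × Tm}
    (hb : b ∈ bs) : bindSubst bs b.1 = b.2 := by
  induction bs with
  | nil => simp at hb
  | cons b' bs ih =>
    rw [List.map_cons, List.nodup_cons] at hnd
    rcases List.mem_cons.1 hb with rfl | hb
    · simp [bindSubst]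
    · have hne : b.1 ≠ b'.1 := fun h => hnd.1 (h ▸ List.mem_map_of_mem hb)
      simp only [bindSubst, List.foldr_cons, Function.update_of_ne hne]
      exact ih hnd.2 hb

-- An equation `s ≐ t` is encoded as the pair `(s, t)`.
def Unifies (σ : ℕ → Tm) (E : List (Tm × Tm)) : Prop :=
  ∀ e ∈ E, e.1.subst σ = e.2.subst σ

def eqnBinding : Tm × Tm → Option (ℕ × Tm)
  | (.var x, t) => some (x, t)
  | (t, .var x) => some (x, t)
  | _ => none

def eqnVars (e : Tm × Tm) : Finset ℕ := e.1.vars ∪ e.2.vars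

def solvedSubst (E : List (Tm × Tm)) : ℕ → Tm := bindSubst (E.filterMap eqnBinding)

section EqnSystems

variable {E : List (Tm × Tm)} {e : Tm × Tm} {x : ℕ} {t : Tm}

lemma eqnBinding_eq_some (h : eqnBinding e = some (x, t)) :
    (e.1 = .var x ∧ e.2 = t) ∨ (e.2 = .var x ∧ e.1 = t) := by
  rcases e with ⟨_ | _ | _ | _, _ | _ | _ | _⟩ <;> simp_all [eqnBinding]

lemma eq_of_eqnBinding_eq_none {σ : ℕ → Tm} (h : eqnBinding e = none)
    (h₁ : e.1.Ground ∨ ∃ x, e.1 = .var x) (h₂ : e.2.Ground ∨ ∃ x, e.2 = .var x)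
    (hσ : e.1.subst σ = e.2.subst σ) : e.1 = e.2 := by
  have hnv : (∀ x, e.1 ≠ .var x) ∧ ∀ x, e.2 ≠ .var x := by
    rcases e with ⟨_ | _ | _ | _, _ | _ | _ | _⟩ <;> simp_all [eqnBinding]
  have hg₁ := h₁.resolve_right fun ⟨x, hx⟩ => hnv.1 x hx
  have hg₂ := h₂.resolve_right fun ⟨x, hx⟩ => hnv.2 x hx
  rwa [hg₁.subst_eq, hg₂.subst_eq] at hσ

lemma vars_subset_eqnVars_of_eqnBinding_eq_some
    (h : eqnBinding e = some (x, t)) : x ∈ eqnVars e ∧ t.vars ⊆ eqnVars e := by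
  rcases eqnBinding_eq_some h with ⟨h₁, rfl⟩ | ⟨h₂, rfl⟩
  · simp [eqnVars, h₁, Tm.vars]
  · simp [eqnVars, h₂, Tm.vars]

lemma notMem_vars_of_eqnBinding_eq_some
    (h : eqnBinding e = some (x, t)) (hd : Disjoint e.1.vars e.2.vars) : x ∉ t.vars := by
  rcases eqnBinding_eq_some h with ⟨h₁, rfl⟩ | ⟨h₂, rfl⟩
  · simpa [h₁, Tm.vars] using hd
  · simpa [h₂, Tm.vars] using hd.symm

lemma subst_solvedSubst_of_unifies {σ : ℕ → Tm} (hσ : Unifies σ E) (x : ℕ) :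
    σ x = (solvedSubst E x).subst σ := by
  rcases bindSubst_eq_var_or_mem (E.filterMap eqnBinding) x with h | h
  · rw [solvedSubst, h]; rfl
  · obtain ⟨e, he, hb⟩ := List.mem_filterMap.1 h
    have := hσ e he
    rcases eqnBinding_eq_some hb with ⟨h₁, h₂⟩ | ⟨h₁, h₂⟩
    · rwa [h₁, h₂] at this
    · rw [h₁, h₂] at this; exact this.symm

lemma nodup_keys_of_pairwise_disjoint (hsep : E.Pairwise (Disjoint on eqnVars)) :
    ((E.filterMap eqnBinding).map Prod.fst).Nodup := by
  refine List.pairwise_map.2 (hsep.filterMap _ fun e e' hd b hb b' hb' => ?_)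
  intro h
  exact Finset.disjoint_left.1 hd (vars_subset_eqnVars_of_eqnBinding_eq_some hb).1
    (h ▸ (vars_subset_eqnVars_of_eqnBinding_eq_some hb').1)

lemma subst_solvedSubst_of_eqnBinding_eq_some
    (hsep : E.Pairwise (Disjoint on eqnVars)) (hsides : ∀ e ∈ E, Disjoint e.1.vars e.2.vars)
    (he : e ∈ E) (hb : eqnBinding e = some (x, t)) :
    e.1.subst (solvedSubst E) = t ∧ e.2.subst (solvedSubst E) = t := by
  have hx : solvedSubst E x = t :=
    bindSubst_of_mem (nodup_keys_of_pairwise_disjoint hsep) (List.mem_filterMap.2 ⟨e, he, hb⟩)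
  have ht : t.subst (solvedSubst E) = t := by
    refine Tm.subst_eq_self fun y hy => bindSubst_of_notMem fun hkey => ?_
    obtain ⟨⟨z, _⟩, hb', rfl⟩ := List.mem_map.1 hkey
    obtain ⟨e', he', hbe'⟩ := List.mem_filterMap.1 hb'
    by_cases hee : e = e'
    · subst hee
      obtain rfl : x = z := (Prod.mk.inj (Option.some.inj (hb.symm.trans hbe'))).1
      exact notMem_vars_of_eqnBinding_eq_some hb (hsides e he) hy
    · exact Finset.disjoint_left.1 (hsep.forall he he' hee)
        ((vars_subset_eqnVars_of_eqnBinding_eq_some hb).2 hy)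
        (vars_subset_eqnVars_of_eqnBinding_eq_some hbe').1
  rcases eqnBinding_eq_some hb with ⟨h₁, rfl⟩ | ⟨h₂, rfl⟩
  · rw [h₁]; exact ⟨hx, ht⟩
  · rw [h₂]; exact ⟨ht, hx⟩

lemma unifies_solvedSubst
    (hsep : E.Pairwise (Disjoint on eqnVars)) (hsides : ∀ e ∈ E, Disjoint e.1.vars e.2.vars)
    (hsolv : ∀ e ∈ E, eqnBinding e = none → e.1 = e.2) : Unifies (solvedSubst E) E := by
  intro e he
  cases hb : eqnBinding e with
  | none => rw [hsolv e he hb]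
  | some b =>
    obtain ⟨h₁, h₂⟩ := subst_solvedSubst_of_eqnBinding_eq_some hsep hsides he hb
    rw [h₁, h₂]

lemma isMGU_solvedSubst {s s' : Tm}
    (hE : ∀ σ, IsUnifier s s' σ ↔ Unifies σ E)
    (hsep : E.Pairwise (Disjoint on eqnVars)) (hsides : ∀ e ∈ E, Disjoint e.1.vars e.2.vars)
    (hsolv : ∀ e ∈ E, eqnBinding e = none → e.1 = e.2) : IsMGU s s' (solvedSubst E) :=
  ⟨(hE _).2 (unifies_solvedSubst hsep hsides hsolv),
    fun σ hσ => ⟨σ, subst_solvedSubst_of_unifies ((hE σ).1 hσ)⟩⟩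

end EqnSystems

lemma IsMGU.symm {s t : Tm} {θ : ℕ → Tm} (h : IsMGU s t θ) : IsMGU t s θ :=
  ⟨h.1.symm, fun σ hσ => h.2 σ hσ.symm⟩

namespace List

variable {α β : Type*}

lemma Pairwise.zip {R : α → α → Prop} {S : β → β → Prop} {l : List α} {l' : List β}
    (h : l.Pairwise R) (h' : l'.Pairwise S) :
    (l.zip l').Pairwise (fun p q => R p.1 q.1 ∧ S p.2 q.2) := by
  induction l generalizing l' with
  | nil => simp
  | cons a l ih =>
    cases l' with
    | nil => simp
    | cons b l' =>
      rw [pairwise_cons] at h h'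
      refine pairwise_cons.2 ⟨fun q hq => ?_, ih h.2 h'.2⟩
      exact ⟨h.1 _ (of_mem_zip hq).1, h'.1 _ (of_mem_zip hq).2⟩

variable {P : α → Prop} [DecidablePred P] {l l₁ l₂ : List α}

lemma mem_map_ite_zip_append {x : α}
    (hx : x ∈ (l.zip l₁).map (fun q => if P q.1 then q.1 else q.2) ++ l₂) :
    (x ∈ l ∧ P x) ∨ x ∈ l₁ ++ l₂ := by
  rcases mem_append.1 hx with hx | hx
  · obtain ⟨⟨a, b⟩, hq, rfl⟩ := mem_map.1 hx
    by_cases ha : P a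
    · dsimp only; rw [if_pos ha]; exact .inl ⟨(of_mem_zip hq).1, ha⟩
    · dsimp only; rw [if_neg ha]; exact .inr (mem_append_left _ (of_mem_zip hq).2)
  · exact .inr (mem_append_right _ hx)

lemma nodup_map_ite_zip_append (hl : l.Nodup) (h₁₂ : (l₁ ++ l₂).Nodup)
    (hP : ∀ a ∈ l, P a → a ∉ l₁ ++ l₂) :
    ((l.zip l₁).map (fun q => if P q.1 then q.1 else q.2) ++ l₂).Nodup := by
  induction l generalizing l₁ with
  | nil => exact h₁₂.sublist (sublist_append_right _ _)
  | cons a l ih =>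
    cases l₁ with
    | nil => exact h₁₂
    | cons b l₁ =>
      rw [nodup_cons] at hl
      rw [cons_append, nodup_cons] at h₁₂
      have ih := ih hl.2 h₁₂.2 fun a' ha' hPa' h => hP a' (mem_cons_of_mem _ ha') hPa'
        (mem_cons_of_mem _ h)
      rw [zip_cons_cons, map_cons, cons_append, nodup_cons]
      refine ⟨fun hmem => ?_, ih⟩
      by_cases ha : P a
      · rw [if_pos ha] at hmem
        rcases mem_map_ite_zip_append hmem with h | h
        · exact hl.1 h.1
        · exact hP a mem_cons_self ha (mem_cons_of_mem _ h)
      · rw [if_neg ha] at hmem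
        rcases mem_map_ite_zip_append hmem with h | h
        · exact hP b (mem_cons_of_mem _ h.1) h.2 (mem_cons_self)
        · exact h₁₂.1 h

end List

lemma pairwise_disjoint_vars_of_nodup {l : List Tm} (hl : ∀ t ∈ l, t.Ground ∨ ∃ x, t = .var x)
    (hnd : l.Nodup) : (l.map Tm.vars).Pairwise Disjoint := by
  refine List.pairwise_map.2 (hnd.imp_of_mem fun {a b} ha hb hne => ?_)
  rcases hl a ha with ha | ⟨x, rfl⟩
  · rw [show a.vars = ∅ from ha]; exact Finset.disjoint_empty_left _
  rcases hl b hb with hb | ⟨y, rfl⟩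
  · rw [show b.vars = ∅ from hb]; exact Finset.disjoint_empty_right _
  simp only [Tm.vars, Finset.disjoint_singleton]
  rintro rfl
  exact hne rfl

lemma isGVD_map_ite_zip_append {ts us₁ us₂ : List Tm} {w : ℕ} (hts : ts.Nodup)
    (hus : IsGVD (us₁ ++ us₂) w) (hnocommon : ∀ t ∈ ts, t ∈ us₁ ++ us₂ → ¬ t.Ground) :
    IsGVD ((ts.zip us₁).map (fun q => if q.1.Ground then q.1 else q.2) ++ us₂) w := by
  set rs := (ts.zip us₁).map (fun q => if q.1.Ground then q.1 else q.2) ++ us₂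
  have hmem : ∀ r ∈ rs, r.Ground ∨ r ∈ us₁ ++ us₂ := fun r hr =>
    (List.mem_map_ite_zip_append hr).imp_left And.right
  have hshape : ∀ r ∈ rs, r.Ground ∨ ∃ x, r = .var x := fun r hr =>
    (hmem r hr).elim .inl (hus.1 r)
  have hnd := List.nodup_map_ite_zip_append hts hus.2.1 fun a ha hg hu => hnocommon a ha hu hg
  refine ⟨hshape, hnd, pairwise_disjoint_vars_of_nodup hshape hnd, fun r hr => ?_⟩
  rcases hmem r hr with hg | hr
  · rw [show r.vars = ∅ from hg]; exact Finset.notMem_empty w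
  · exact hus.2.2.2 r hr

section OpenListEqns

variable {ts us₁ us₂ : List Tm} {v w : ℕ}

def openListEqns (ts us₁ us₂ : List Tm) (v w : ℕ) : List (Tm × Tm) :=
  ts.zip us₁ ++ [(.var v, mkOpen us₂ w)]

lemma isUnifier_mkOpen_iff {σ : ℕ → Tm} (h : ts.length = us₁.length) :
    IsUnifier (mkOpen ts v) (mkOpen (us₁ ++ us₂) w) σ ↔
      Unifies σ (openListEqns ts us₁ us₂ v w) := by
  induction ts generalizing us₁ with
  | nil =>
    obtain rfl : us₁ = [] := List.length_eq_zero_iff.1 h.symm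
    simp [IsUnifier, Unifies, openListEqns, mkOpen, Tm.subst]
  | cons t ts ih =>
    obtain ⟨u, us₁, rfl⟩ := List.exists_cons_of_length_eq_add_one h.symm
    have ih := ih (us₁ := us₁) (Nat.succ.inj h)
    simp only [Unifies, openListEqns, IsUnifier] at ih ⊢
    simp only [mkOpen_cons, List.cons_append, Tm.subst, Tm.cons.injEq, List.zip_cons_cons,
      List.forall_mem_cons, ih]

lemma disjoint_sides_openListEqns
    (hdisj : Disjoint (mkOpen ts v).vars (mkOpen (us₁ ++ us₂) w).vars) :
    ∀ e ∈ openListEqns ts us₁ us₂ v w, Disjoint e.1.vars e.2.vars := by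
  intro e he
  rcases List.mem_append.1 he with he | he
  · obtain ⟨ha, hb⟩ := List.of_mem_zip he
    exact hdisj.mono (vars_subset_vars_mkOpen ha v)
      (vars_subset_vars_mkOpen (List.mem_append_left _ hb) w)
  · rw [List.mem_singleton.1 he]
    exact hdisj.mono (vars_var_subset_vars_mkOpen ts v) (vars_mkOpen_subset_append us₁ us₂ w)

lemma pairwise_disjoint_openListEqns (h₁ : IsGVD ts v) (h₂ : IsGVD (us₁ ++ us₂) w)
    (hdisj : Disjoint (mkOpen ts v).vars (mkOpen (us₁ ++ us₂) w).vars) :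
    (openListEqns ts us₁ us₂ v w).Pairwise (Disjoint on eqnVars) := by
  have hcross : ∀ a ∈ ts, ∀ b ∈ us₁, Disjoint a.vars b.vars := fun a ha b hb =>
    hdisj.mono (vars_subset_vars_mkOpen ha v)
      (vars_subset_vars_mkOpen (List.mem_append_left _ hb) w)
  have hus := h₂.2.2.1
  rw [List.map_append, List.pairwise_append] at hus
  rw [openListEqns, List.pairwise_append]
  refine ⟨?_, List.pairwise_singleton _ _, ?_⟩
  · refine ((List.pairwise_map.1 h₁.2.2.1).zip (List.pairwise_map.1 hus.1)).imp_of_mem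
      fun {p q} hp hq h => ?_
    simp only [onFun, eqnVars, Finset.disjoint_union_left, Finset.disjoint_union_right]
    exact ⟨⟨h.1, (hcross _ (List.of_mem_zip hq).1 _ (List.of_mem_zip hp).2).symm⟩,
      hcross _ (List.of_mem_zip hp).1 _ (List.of_mem_zip hq).2, h.2⟩
  · intro p hp e he
    rw [List.mem_singleton.1 he]
    obtain ⟨ha, hb⟩ := List.of_mem_zip hp
    refine Finset.disjoint_left.2 fun x hx hx' => ?_
    simp only [eqnVars, Tm.vars, Finset.mem_union, Finset.mem_singleton] at hx hx'
    have hvL := vars_var_subset_vars_mkOpen ts v (Finset.mem_singleton_self v)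
    rcases hx with hx | hx
    · rcases hx' with rfl | hx'
      · exact h₁.2.2.2 _ ha hx
      · exact Finset.disjoint_left.1 hdisj (vars_subset_vars_mkOpen ha v hx)
          (vars_mkOpen_subset_append us₁ us₂ w hx')
    · rcases hx' with rfl | hx'
      · exact Finset.disjoint_left.1 hdisj hvL
          (vars_subset_vars_mkOpen (List.mem_append_left _ hb) w hx)
      rcases mem_vars_mkOpen.1 hx' with rfl | ⟨c, hc, hxc⟩
      · exact h₂.2.2.2 _ (List.mem_append_left _ hb) hx
      · exact Finset.disjoint_left.1
          (hus.2.2 _ (List.mem_map_of_mem hb) _ (List.mem_map_of_mem hc)) hx hxc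

lemma subst_mkOpen_solvedSubst_openListEqns (hlen : ts.length = us₁.length)
    (hts : ∀ t ∈ ts, t.Ground ∨ ∃ x, t = .var x)
    (hsep : (openListEqns ts us₁ us₂ v w).Pairwise (Disjoint on eqnVars))
    (hsides : ∀ e ∈ openListEqns ts us₁ us₂ v w, Disjoint e.1.vars e.2.vars) :
    (mkOpen ts v).subst (solvedSubst (openListEqns ts us₁ us₂ v w)) =
      mkOpen ((ts.zip us₁).map (fun q => if q.1.Ground then q.1 else q.2) ++ us₂) w := by
  have hθv := (subst_solvedSubst_of_eqnBinding_eq_some hsep hsides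
    (List.mem_append_right _ (List.mem_singleton_self (Tm.var v, mkOpen us₂ w))) rfl).1
  rw [subst_mkOpen_of_eq hθv]
  congr 2
  set θ := solvedSubst (openListEqns ts us₁ us₂ v w)
  conv_lhs => rw [← List.map_fst_zip hlen.le, List.map_map]
  refine List.map_congr_left fun ⟨a, b⟩ hq => ?_
  show a.subst _ = if a.Ground then a else b
  rcases hts a (List.of_mem_zip hq).1 with hg | ⟨x, rfl⟩
  · rw [if_pos hg, hg.subst_eq]
  · rw [if_neg (by simp [Tm.Ground, Tm.vars])]
    exact (subst_solvedSubst_of_eqnBinding_eq_some hsep hsides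
      (List.mem_append_left _ hq) rfl).1

end OpenListEqns

theorem exists_isMGU_isGVD_of_length_eq {ts us₁ us₂ : List Tm} {v w : ℕ}
    (hlen : ts.length = us₁.length) (h₁ : IsGVD ts v) (h₂ : IsGVD (us₁ ++ us₂) w)
    (hdisj : Disjoint (mkOpen ts v).vars (mkOpen (us₁ ++ us₂) w).vars)
    (hnocommon : ∀ t ∈ ts, t ∈ us₁ ++ us₂ → ¬ t.Ground)
    (hunif : ∃ θ, IsUnifier (mkOpen ts v) (mkOpen (us₁ ++ us₂) w) θ) :
    ∃ θ, IsMGU (mkOpen ts v) (mkOpen (us₁ ++ us₂) w) θ ∧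
      ∃ rs z, (mkOpen ts v).subst θ = mkOpen rs z ∧ IsGVD rs z := by
  obtain ⟨σ, hσ⟩ := hunif
  set E := openListEqns ts us₁ us₂ v w
  have hE : ∀ τ, IsUnifier (mkOpen ts v) (mkOpen (us₁ ++ us₂) w) τ ↔ Unifies τ E :=
    fun _ => isUnifier_mkOpen_iff hlen
  have hsep := pairwise_disjoint_openListEqns h₁ h₂ hdisj
  have hsides := disjoint_sides_openListEqns hdisj
  have hsolv : ∀ e ∈ E, eqnBinding e = none → e.1 = e.2 := by
    intro e he hb
    rcases List.mem_append.1 he with hez | he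
    · obtain ⟨ha, hb'⟩ := List.of_mem_zip hez
      exact eq_of_eqnBinding_eq_none hb (h₁.1 _ ha) (h₂.1 _ (List.mem_append_left _ hb'))
        ((hE σ).1 hσ e he)
    · simp [List.mem_singleton.1 he, eqnBinding] at hb
  exact ⟨solvedSubst E, isMGU_solvedSubst hE hsep hsides hsolv, _, w,
    subst_mkOpen_solvedSubst_openListEqns hlen h₁.1 hsep hsides,
    isGVD_map_ite_zip_append h₁.2.1 h₂ hnocommon⟩

theorem exists_isMGU_isGVD_of_length_le {ts us : List Tm} {v w : ℕ}
    (hle : ts.length ≤ us.length) (h₁ : IsGVD ts v) (h₂ : IsGVD us w)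
    (hdisj : Disjoint (mkOpen ts v).vars (mkOpen us w).vars)
    (hnocommon : ∀ t ∈ ts, t ∈ us → ¬ t.Ground)
    (hunif : ∃ θ, IsUnifier (mkOpen ts v) (mkOpen us w) θ) :
    ∃ θ, IsMGU (mkOpen ts v) (mkOpen us w) θ ∧
      ∃ rs z, (mkOpen ts v).subst θ = mkOpen rs z ∧ IsGVD rs z := by
  rw [← List.take_append_drop ts.length us] at h₂ hdisj hnocommon hunif ⊢
  exact exists_isMGU_isGVD_of_length_eq (by simp [hle]) h₁ h₂ hdisj hnocommon hunif

/-- the unification of two unifiable, variable-disjoint g.v.d.'s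
    with no common ground member is again a g.v.d.: there is an mgu whose
    common instance is a g.v.d. -/
theorem gvd_unify_gvd (ts us : List Tm) (v w : ℕ)
    (h1 : IsGVD ts v) (h2 : IsGVD us w)
    (hdisj : Disjoint (mkOpen ts v).vars (mkOpen us w).vars)
    (hnocommon : ∀ t, t ∈ ts → t ∈ us → ¬ t.Ground)
    (hunif : ∃ θ, IsUnifier (mkOpen ts v) (mkOpen us w) θ) :
    ∃ θ, IsMGU (mkOpen ts v) (mkOpen us w) θ ∧
      ∃ rs z, (mkOpen ts v).subst θ = mkOpen rs z ∧ IsGVD rs z := by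
  rcases le_total ts.length us.length with hle | hle
  · exact exists_isMGU_isGVD_of_length_le hle h1 h2 hdisj hnocommon hunif
  · obtain ⟨σ, hσ⟩ := hunif
    obtain ⟨θ, hθ, rs, z, hrs, hgvd⟩ := exists_isMGU_isGVD_of_length_le hle h2 h1 hdisj.symm
      (fun t hu ht => hnocommon t ht hu) ⟨σ, hσ.symm⟩
    exact ⟨θ, hθ.symm, rs, z, hθ.1.symm.trans hrs, hgvd⟩
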